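/- arXiv:2511.22646 — 4 statements merged into one kernel-verified Lean document; each statement's English description precedes it below -/
import Mathlib

section
/- Let M and N be matroids on a common finite ground set E with r(M) + r(N) = |E| + 1. Let E₁, E₂ ⊆ E satisfy E₁ ∪ E₂ = E and E₁ ∩ E₂ = {ε} for some ε ∈ E. If r(M/E₁) + r(N \ E₁) > |E \ E₁| + 1, then r(M \ E₂) + r(N/E₂) < |E \ E₂| + 1. -/
/-- A matroid rank function on ground set `E`. -/
def IsRankFn {α : Type*} [DecidableEq α] (E : Finset α) (r : Finset α → ℕ) : Prop :=
  r ∅ = 0 ∧ (∀ A, A ⊆ E → r A ≤ A.card) ∧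
    (∀ A B, A ⊆ B → B ⊆ E → r A ≤ r B) ∧
    (∀ A B, A ⊆ E → B ⊆ E → r (A ∪ B) + r (A ∩ B) ≤ r A + r B)

/-- With `r(M/X) = r_M(E) − r_M(X)` and `r(M \ X) = r_M(E \ X)`:
if `r(M/E₁) + r(N \ E₁) > |E \ E₁| + 1` then `r(M \ E₂) + r(N/E₂) < |E \ E₂| + 1`. -/
theorem infinite_summand_forces_zero {α : Type*} [DecidableEq α]
    (E : Finset α) (rM rN : Finset α → ℕ)
    (hM : IsRankFn E rM) (hN : IsRankFn E rN)
    (hrank : rM E + rN E = E.card + 1)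
    (ε : α) (hε : ε ∈ E) (E₁ E₂ : Finset α)
    (hunion : E₁ ∪ E₂ = E) (hinter : E₁ ∩ E₂ = {ε})
    (h : (rM E - rM E₁) + rN (E \ E₁) > (E \ E₁).card + 1) :
    rM (E \ E₂) + (rN E - rN E₂) < (E \ E₂).card + 1 := by
  have hE1 : E₁ ⊆ E := hunion ▸ Finset.subset_union_left
  have hE2 : E₂ ⊆ E := hunion ▸ Finset.subset_union_right
  have h1 : E \ E₂ ⊆ E₁ := by
    intro x hx
    simp only [Finset.mem_sdiff] at hx
    have := hx.1
    rw [← hunion, Finset.mem_union] at this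
    tauto
  have h2 : E \ E₁ ⊆ E₂ := by
    intro x hx
    simp only [Finset.mem_sdiff] at hx
    have := hx.1
    rw [← hunion, Finset.mem_union] at this
    tauto
  have m1 : rM E₁ ≤ rM E := hM.2.2.1 _ _ hE1 Finset.Subset.rfl
  have m2 : rM (E \ E₂) ≤ rM E₁ := hM.2.2.1 _ _ h1 hE1
  have m3 : rN E₂ ≤ rN E := hN.2.2.1 _ _ hE2 Finset.Subset.rfl
  have m4 : rN (E \ E₁) ≤ rN E₂ := hN.2.2.1 _ _ h2 hE2
  have c1 : (E \ E₁).card = E.card - E₁.card := Finset.card_sdiff_of_subset hE1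
  have c2 : (E \ E₂).card = E.card - E₂.card := Finset.card_sdiff_of_subset hE2
  have c3 : E₁.card + E₂.card = E.card + 1 := by
    have := Finset.card_union_add_card_inter E₁ E₂
    rw [hunion, hinter, Finset.card_singleton] at this
    omega
  have c4 : E₁.card ≤ E.card := Finset.card_le_card hE1
  have c5 : E₂.card ≤ E.card := Finset.card_le_card hE2
  omega
end

section
/- Let M and N be loopless matroids on a common finite ground set E with r(M) + r(N) = |E| + 1. Let ε ∈ E and E₁, E₂ ⊆ E with E₁ ∪ E₂ = E, E₁ ∩ E₂ = {ε}, |E₁| ≥ 2 and |E₂| ≥ 2. If ε is a coloop of M \ (E₂ \ {ε}) or of N \ (E₁ \ {ε}), then r(M \ E₂) + r(N/E₂) + r(M/E₁) + r(N \ E₁) < |E| + 1; in particular either r(M \ E₂) + r(N/E₂) < |E₁| or r(M/E₁) + r(N \ E₁) < |E₂|. -/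
/-- `e` is a coloop of the matroid on ground set `G` with rank function `r`. -/
def IsColoopOn {α : Type*} [DecidableEq α] (G : Finset α) (r : Finset α → ℕ) (e : α) : Prop :=
  r (G.erase e) + 1 = r G

/-- If `ε` is a coloop of `M \ (E₂ \ {ε})` (ground set `E₁`) or of `N \ (E₁ \ {ε})`
(ground set `E₂`), then the sum of ranks of the four minors is `< |E| + 1`; in
particular one of the two relevant pairs has deficient rank.  Here
`r(M \ E₂) = r_M(E \ E₂)`, `r(N/E₂) = r_N(E) − r_N(E₂)`, `r(M/E₁) = r_M(E) − r_M(E₁)`,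
`r(N \ E₁) = r_N(E \ E₁)`. -/
theorem coloop_case_rank_deficiency {α : Type*} [DecidableEq α]
    (E : Finset α) (rM rN : Finset α → ℕ)
    (hM : IsRankFn E rM) (hN : IsRankFn E rN)
    (hloopM : ∀ e ∈ E, rM {e} = 1) (hloopN : ∀ e ∈ E, rN {e} = 1)
    (hrank : rM E + rN E = E.card + 1)
    (ε : α) (hε : ε ∈ E) (E₁ E₂ : Finset α)
    (hunion : E₁ ∪ E₂ = E) (hinter : E₁ ∩ E₂ = {ε})
    (h1 : 2 ≤ E₁.card) (h2 : 2 ≤ E₂.card)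
    (hcoloop : IsColoopOn E₁ rM ε ∨ IsColoopOn E₂ rN ε) :
    rM (E \ E₂) + (rN E - rN E₂) + ((rM E - rM E₁) + rN (E \ E₁)) < E.card + 1 ∧
      (rM (E \ E₂) + (rN E - rN E₂) < E₁.card ∨
        (rM E - rM E₁) + rN (E \ E₁) < E₂.card) := by
  obtain ⟨-, -, monoM, -⟩ := hM
  obtain ⟨-, -, monoN, -⟩ := hN
  have hE1 : E₁ ⊆ E := hunion ▸ Finset.subset_union_left
  have hE2 : E₂ ⊆ E := hunion ▸ Finset.subset_union_right
  have hεi : ε ∈ E₁ ∩ E₂ := hinter ▸ Finset.mem_singleton_self ε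
  have hε1 : ε ∈ E₁ := Finset.mem_of_mem_inter_left hεi
  have hε2 : ε ∈ E₂ := Finset.mem_of_mem_inter_right hεi
  have hd2 : E \ E₂ = E₁.erase ε := by
    ext x
    simp only [Finset.mem_sdiff, Finset.mem_erase]
    constructor
    · rintro ⟨hx, hx2⟩
      have hx1 : x ∈ E₁ := by
        rw [← hunion] at hx
        rcases Finset.mem_union.mp hx with h | h
        · exact h
        · exact absurd h hx2
      exact ⟨fun h => hx2 (h ▸ hε2), hx1⟩
    · rintro ⟨hne, hx1⟩
      refine ⟨hE1 hx1, fun hx2 => hne ?_⟩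
      have : x ∈ ({ε} : Finset α) := hinter ▸ Finset.mem_inter.mpr ⟨hx1, hx2⟩
      simpa using this
  have hd1 : E \ E₁ = E₂.erase ε := by
    ext x
    simp only [Finset.mem_sdiff, Finset.mem_erase]
    constructor
    · rintro ⟨hx, hx1⟩
      have hx2 : x ∈ E₂ := by
        rw [← hunion] at hx
        rcases Finset.mem_union.mp hx with h | h
        · exact absurd h hx1
        · exact h
      exact ⟨fun h => hx1 (h ▸ hε1), hx2⟩
    · rintro ⟨hne, hx2⟩
      refine ⟨hE2 hx2, fun hx1 => hne ?_⟩
      have : x ∈ ({ε} : Finset α) := hinter ▸ Finset.mem_inter.mpr ⟨hx1, hx2⟩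
      simpa using this
  have hm1 : rM (E₁.erase ε) ≤ rM E₁ := monoM _ _ (Finset.erase_subset _ _) hE1
  have hm2 : rN (E₂.erase ε) ≤ rN E₂ := monoN _ _ (Finset.erase_subset _ _) hE2
  have hM1 : rM E₁ ≤ rM E := monoM _ _ hE1 Finset.Subset.rfl
  have hN2 : rN E₂ ≤ rN E := monoN _ _ hE2 Finset.Subset.rfl
  have hkey : rM (E₁.erase ε) + rN (E₂.erase ε) < rM E₁ + rN E₂ := by
    rcases hcoloop with h | h <;> unfold IsColoopOn at h <;> omega
  have hcard : E₁.card + E₂.card = E.card + 1 := by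
    have := Finset.card_union_add_card_inter E₁ E₂
    rw [hunion, hinter] at this
    simp only [Finset.card_singleton] at this
    omega
  rw [hd1, hd2]
  constructor <;> omega
end

section
/- Let M be a matroid on finite ground set E with |E| ≥ 2 that is disconnected in the sense that M = M₁ ⊕ M₂ for matroids M₁, M₂ on a nontrivial partition E = E₁ ⊔ E₂ (both parts nonempty). Then the beta invariant β(M) = 0. -/
/-- If `M = M₁ ⊕ M₂` across a nontrivial partition `E = E₁ ⊔ E₂` (so
`r(X) = r₁(X ∩ E₁) + r₂(X ∩ E₂)`), then the beta invariant
`β(M) = (−1)^{r(E)} Σ_{X ⊆ E} (−1)^{|X|} r(X)` vanishes. -/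
theorem beta_invariant_of_direct_sum {α : Type*} [DecidableEq α]
    (E E₁ E₂ : Finset α) (r r₁ r₂ : Finset α → ℕ)
    (hE : E = E₁ ∪ E₂) (hdisj : Disjoint E₁ E₂)
    (h1 : E₁.Nonempty) (h2 : E₂.Nonempty) (hcard : 2 ≤ E.card)
    (hr : IsRankFn E r) (hr1 : IsRankFn E₁ r₁) (hr2 : IsRankFn E₂ r₂)
    (hsum : ∀ X ⊆ E, r X = r₁ (X ∩ E₁) + r₂ (X ∩ E₂)) :
    (-1 : ℤ) ^ (r E) * ∑ X ∈ E.powerset, (-1 : ℤ) ^ X.card * (r X : ℤ) = 0 := by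
  suffices h : ∑ X ∈ E.powerset, (-1 : ℤ) ^ X.card * (r X : ℤ) = 0 by
    rw [h, mul_zero]
  have key : ∑ X ∈ E.powerset, (-1 : ℤ) ^ X.card * (r X : ℤ) =
      ∑ p ∈ E₁.powerset ×ˢ E₂.powerset,
        (-1 : ℤ) ^ (p.1.card + p.2.card) * ((r₁ p.1 : ℤ) + (r₂ p.2 : ℤ)) := by
    apply Finset.sum_nbij' (fun X => (X ∩ E₁, X ∩ E₂)) (fun p => p.1 ∪ p.2)
    · intro X hX
      simp only [Finset.mem_product, Finset.mem_powerset]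
      exact ⟨Finset.inter_subset_right, Finset.inter_subset_right⟩
    · intro p hp
      simp only [Finset.mem_product, Finset.mem_powerset] at hp ⊢
      rw [hE]; exact Finset.union_subset_union hp.1 hp.2
    · intro X hX
      simp only [Finset.mem_powerset] at hX
      rw [← Finset.inter_union_distrib_left, ← hE, Finset.inter_eq_left.mpr hX]
    · intro p hp
      simp only [Finset.mem_product, Finset.mem_powerset] at hp
      have h1' : p.1 ∩ E₁ = p.1 := Finset.inter_eq_left.mpr hp.1
      have h2' : p.2 ∩ E₂ = p.2 := Finset.inter_eq_left.mpr hp.2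
      have h12 : p.2 ∩ E₁ = ∅ := by
        apply Finset.eq_empty_of_forall_notMem
        intro x hx
        simp only [Finset.mem_inter] at hx
        exact (Finset.disjoint_left.mp hdisj hx.2 (hp.2 hx.1))
      have h21 : p.1 ∩ E₂ = ∅ := by
        apply Finset.eq_empty_of_forall_notMem
        intro x hx
        simp only [Finset.mem_inter] at hx
        exact (Finset.disjoint_left.mp hdisj (hp.1 hx.1) hx.2)
      ext <;> simp [Finset.union_inter_distrib_right, h1', h2', h12, h21]
    · intro X hX
      simp only [Finset.mem_powerset] at hX
      have hdX : Disjoint (X ∩ E₁) (X ∩ E₂) :=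
        hdisj.mono Finset.inter_subset_right Finset.inter_subset_right
      have hXeq : (X ∩ E₁) ∪ (X ∩ E₂) = X := by
        rw [← Finset.inter_union_distrib_left, ← hE, Finset.inter_eq_left.mpr hX]
      have hc : X.card = (X ∩ E₁).card + (X ∩ E₂).card := by
        conv_lhs => rw [← hXeq]
        rw [Finset.card_union_of_disjoint hdX]
      rw [hsum X hX, hc]
      push_cast
      ring
  rw [key, Finset.sum_product]
  have hz1 : ∑ A ∈ E₁.powerset, (-1 : ℤ) ^ A.card = 0 :=
    Finset.sum_powerset_neg_one_pow_card_of_nonempty h1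
  have hz2 : ∑ B ∈ E₂.powerset, (-1 : ℤ) ^ B.card = 0 :=
    Finset.sum_powerset_neg_one_pow_card_of_nonempty h2
  have step : ∀ A ∈ E₁.powerset,
      ∑ B ∈ E₂.powerset, (-1 : ℤ) ^ (A.card + B.card) * ((r₁ A : ℤ) + (r₂ B : ℤ))
        = (-1 : ℤ) ^ A.card * ∑ B ∈ E₂.powerset, (-1 : ℤ) ^ B.card * (r₂ B : ℤ) := by
    intro A _
    rw [Finset.mul_sum]
    have : ∀ B ∈ E₂.powerset, (-1 : ℤ) ^ (A.card + B.card) * ((r₁ A : ℤ) + (r₂ B : ℤ))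
        = (-1 : ℤ) ^ A.card * (r₁ A : ℤ) * (-1 : ℤ) ^ B.card
          + (-1 : ℤ) ^ A.card * ((-1 : ℤ) ^ B.card * (r₂ B : ℤ)) := by
      intro B _; rw [pow_add]; ring
    rw [Finset.sum_congr rfl this, Finset.sum_add_distrib, ← Finset.mul_sum, hz2, mul_zero,
      zero_add]
  rw [Finset.sum_congr rfl step, ← Finset.sum_mul, hz1, zero_mul]
end

section
/- Let M, M' be matroids of the same rank on the same ground set E with M ⪯ M' in the weak order (every basis of M is a basis of M'). Then with respect to any fixed linear order on E, every nbc-basis of M is an nbc-basis of M'; consequently nbc(M) ≤ nbc(M'). -/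
open Matroid

/-- A circuit of a matroid: a minimal dependent set. -/
def IsCircuit {α : Type*} (M : Matroid α) (C : Set α) : Prop :=
  M.Dep C ∧ ∀ D : Set α, D ⊂ C → ¬ M.Dep D

/-- A broken circuit: a circuit with its minimum element (in the fixed linear order)
removed. -/
def IsBrokenCircuit {α : Type*} [LinearOrder α] (M : Matroid α) (D : Set α) : Prop :=
  ∃ C : Set α, ∃ m : α, _root_.IsCircuit M C ∧ m ∈ C ∧ (∀ x ∈ C, m ≤ x) ∧ D = C \ {m}

/-- An nbc-basis: a basis containing no broken circuit. -/
def IsNbcBase {α : Type*} [LinearOrder α] (M : Matroid α) (B : Set α) : Prop :=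
  M.IsBase B ∧ ∀ D : Set α, IsBrokenCircuit M D → ¬ D ⊆ B

/-! Every independent set of `M` is independent in `M'`, so every circuit `C'` of `M'` is
dependent in `M` and contains a circuit `C` of `M`. If `m = min C'` and `C' \ {m}` lies in a
basis of `M`, then `m ∈ C`, so `C \ {m}` is a broken circuit of `M` inside `C' \ {m}`. -/

lemma isCircuit_iff_isCircuit {α : Type*} {M : Matroid α} {C : Set α} :
    _root_.IsCircuit M C ↔ M.IsCircuit C :=
  Set.minimal_iff_forall_ssubset.symm

section WeakOrder

variable {α : Type*} {M M' : Matroid α}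

lemma Matroid.Indep.of_forall_isBase_imp (hweak : ∀ B, M.IsBase B → M'.IsBase B)
    {I : Set α} (hI : M.Indep I) : M'.Indep I :=
  let ⟨B, hB, hIB⟩ := hI.exists_isBase_superset
  (hweak B hB).indep.subset hIB

lemma Matroid.Dep.of_forall_isBase_imp (hE : M.E = M'.E)
    (hweak : ∀ B, M.IsBase B → M'.IsBase B) {X : Set α} (hX : M'.Dep X) : M.Dep X :=
  dep_iff.2 ⟨fun hI => hX.not_indep (hI.of_forall_isBase_imp hweak), hE ▸ hX.subset_ground⟩

variable [LinearOrder α]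

lemma IsBrokenCircuit.exists_subset_of_indep (hdep : ∀ X, M'.Dep X → M.Dep X)
    {D : Set α} (hD : IsBrokenCircuit M' D) (hDi : M.Indep D) :
    ∃ D' ⊆ D, IsBrokenCircuit M D' := by
  obtain ⟨C', m, hC', hmC', hmin, rfl⟩ := hD
  obtain ⟨C, hCC', hC⟩ := (hdep C' hC'.1).exists_isCircuit_subset
  have hmC : m ∈ C := by
    by_contra hmC
    exact hC.dep.not_indep (hDi.subset fun x hx => ⟨hCC' hx, fun h => hmC (h ▸ hx)⟩)
  exact ⟨C \ {m}, Set.sdiff_subset_sdiff_left hCC',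
    C, m, isCircuit_iff_isCircuit.2 hC, hmC, fun x hx => hmin x (hCC' hx), rfl⟩

lemma IsNbcBase.of_dep_imp (hdep : ∀ X, M'.Dep X → M.Dep X)
    (hweak : ∀ B, M.IsBase B → M'.IsBase B) {B : Set α} (hB : IsNbcBase M B) :
    IsNbcBase M' B := by
  refine ⟨hweak B hB.1, fun D hD hDB => ?_⟩
  obtain ⟨D', hD'D, hD'⟩ := hD.exists_subset_of_indep hdep (hB.1.indep.subset hDB)
  exact hB.2 D' hD' (hD'D.trans hDB)

end WeakOrder

theorem nbc_mono_weak_order_general {α : Type*} [LinearOrder α] (M M' : Matroid α)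
    (hE : M.E = M'.E) (hfin : M'.E.Finite)
    (hweak : ∀ B : Set α, M.IsBase B → M'.IsBase B) :
    (∀ B : Set α, IsNbcBase M B → IsNbcBase M' B) ∧
      {B : Set α | IsNbcBase M B}.ncard ≤ {B : Set α | IsNbcBase M' B}.ncard := by
  have hnbc : ∀ B, IsNbcBase M B → IsNbcBase M' B :=
    fun B => IsNbcBase.of_dep_imp (fun X => Dep.of_forall_isBase_imp hE hweak) hweak
  have hfinite : {B : Set α | IsNbcBase M' B}.Finite :=
    hfin.finite_subsets.subset fun B hB => hB.1.subset_ground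
  exact ⟨hnbc, Set.ncard_le_ncard hnbc hfinite⟩

/-- If `M ⪯ M'` in the weak order (same ground set, same rank, every basis of `M` a
basis of `M'`), then every nbc-basis of `M` is an nbc-basis of `M'`; hence
`nbc(M) ≤ nbc(M')`. -/
theorem nbc_mono_weak_order {α : Type*} [LinearOrder α] (M M' : Matroid α)
    (hE : M.E = M'.E) (hfin : M'.E.Finite)
    (hrank : ∀ B B' : Set α, M.IsBase B → M'.IsBase B' → B.ncard = B'.ncard)
    (hweak : ∀ B : Set α, M.IsBase B → M'.IsBase B) :
    (∀ B : Set α, IsNbcBase M B → IsNbcBase M' B) ∧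
      {B : Set α | IsNbcBase M B}.ncard ≤ {B : Set α | IsNbcBase M' B}.ncard :=
  nbc_mono_weak_order_general M M' hE hfin hweak
end
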